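/- arXiv:1006.2352 — 3 statements merged into one kernel-verified Lean document; each statement's English description precedes it below -/
import Mathlib

section
/- Let σ and ρ be density matrices on ℂ² ⊗ ℂ² with σ pure. Suppose Tr(ρ P) = Tr(σ P) for every P in a set S of tensor products of Pauli matrices, and suppose Tr(σ P) = 0 for all two-qubit Pauli products P not in S ∪ {I⊗I}. If additionally Tr(ρ P) = Tr(σ P) holds for all Pauli products P in S, then Tr(ρ²) ≤ 1 forces Tr(ρ P) = 0 for all P ∉ S ∪ {I⊗I}, and hence ρ = σ. -/
open Matrix
open scoped Kronecker ComplexOrder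

/-!
Expanding in the Pauli basis, `Tr(ρσ) = ¼ Σ_P Tr(ρP) Tr(σP)`. The coefficients of `ρ` and `σ`
agree on `S ∪ {I⊗I}` and those of `σ` vanish elsewhere, so `Tr(ρσ) = Tr(σ²) = 1`. Then
`Tr((ρ - σ)²) = Tr(ρ²) - 2 Tr(ρσ) + Tr(σ²) = Tr(ρ²) - 1 ≤ 0`, since a density matrix has purity
`Σ λᵢ² ≤ (Σ λᵢ)² = 1`; as `ρ - σ` is Hermitian this forces `ρ = σ`.
-/

/-- The four Pauli matrices `I, X, Y, Z`. -/
noncomputable def pauli : Fin 4 → Matrix (Fin 2) (Fin 2) ℂ :=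
  ![1, !![0, 1; 1, 0], !![0, -Complex.I; Complex.I, 0], !![1, 0; 0, -1]]

/-- Two-qubit Pauli products `M ⊗ N` with `M, N ∈ {I, X, Y, Z}`. -/
noncomputable def pauliProd (p : Fin 4 × Fin 4) :
    Matrix (Fin 2 × Fin 2) (Fin 2 × Fin 2) ℂ :=
  pauli p.1 ⊗ₖ pauli p.2

namespace Matrix

variable {𝕜 n : Type*} [RCLike 𝕜] [Fintype n] {A B : Matrix n n 𝕜}

lemma IsHermitian.trace_mul_self [DecidableEq n] (hA : A.IsHermitian) :
    (A * A).trace = ∑ i, ((hA.eigenvalues i ^ 2 : ℝ) : 𝕜) := by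
  conv_lhs => rw [hA.spectral_theorem, ← map_mul, Unitary.conjStarAlgAut_apply, trace_mul_cycle,
    Unitary.coe_star_mul_self, one_mul, diagonal_mul_diagonal, trace_diagonal]
  simp [sq]

lemma PosSemidef.trace_mul_self_le_sq (hA : A.PosSemidef) : (A * A).trace ≤ A.trace ^ 2 := by
  classical
  rw [hA.isHermitian.trace_mul_self, hA.isHermitian.trace_eq_sum_eigenvalues]
  norm_cast
  exact RCLike.ofReal_le_ofReal.mpr <|
    Finset.sum_sq_le_sq_sum_of_nonneg fun i _ ↦ hA.eigenvalues_nonneg i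

lemma PosSemidef.eq_of_trace_mul_eq_one (hA : A.PosSemidef) (hAtr : A.trace = 1)
    (hB : B.IsHermitian) (hBB : (B * B).trace = 1) (hAB : (A * B).trace = 1) : A = B := by
  have hBA : (B * A).trace = 1 := trace_mul_comm B A ▸ hAB
  have hAA : (A * A).trace ≤ 1 := by simpa [hAtr] using hA.trace_mul_self_le_sq
  have hdist : ((A - B)ᴴ * (A - B)).trace = (A * A).trace - 1 := by
    rw [(hA.isHermitian.sub hB).eq, sub_mul, mul_sub, mul_sub, trace_sub, trace_sub, trace_sub,
      hAB, hBA, hBB]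
    ring
  rw [← sub_eq_zero, ← trace_conjTranspose_mul_self_eq_zero_iff]
  refine le_antisymm ?_ (posSemidef_conjTranspose_mul_self _).trace_nonneg
  rw [hdist]
  exact sub_nonpos.mpr hAA

end Matrix

lemma pauliProd_zero_zero : pauliProd (0, 0) = 1 := by
  simp [pauliProd, pauli]

lemma trace_mul_eq_sum_pauliProd (A B : Matrix (Fin 2 × Fin 2) (Fin 2 × Fin 2) ℂ) :
    (A * B).trace =
      (1 / 4 : ℂ) * ∑ p, (A * pauliProd p).trace * (B * pauliProd p).trace := by
  simp only [trace, diag, mul_apply, pauliProd, pauli, kroneckerMap_apply,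
    Fintype.sum_prod_type, Fin.sum_univ_succ, Fin.sum_univ_zero]
  norm_num [cons_val_zero, cons_val_one, cons_val_two, cons_val_three, head_cons, tail_cons,
    one_apply]
  ring_nf
  simp only [Complex.I_sq]
  ring

/-- If `σ` is a pure two-qubit state, `ρ` agrees with `σ` on all Pauli products
in `S`, and `σ` has vanishing Pauli coefficients outside `S ∪ {I⊗I}`, then `ρ`
also has vanishing Pauli coefficients outside `S ∪ {I⊗I}`, and hence `ρ = σ`. -/
theorem stmt10 (S : Set (Fin 4 × Fin 4))
    (ρ σ : Matrix (Fin 2 × Fin 2) (Fin 2 × Fin 2) ℂ)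
    (hρ : ρ.PosSemidef) (hρtr : ρ.trace = 1)
    (hσ : σ.PosSemidef) (hσtr : σ.trace = 1)
    (hpure : σ * σ = σ)
    (hagree : ∀ p ∈ S, (ρ * pauliProd p).trace = (σ * pauliProd p).trace)
    (hvanish : ∀ p ∉ insert ((0, 0) : Fin 4 × Fin 4) S,
      (σ * pauliProd p).trace = 0) :
    (∀ p ∉ insert ((0, 0) : Fin 4 × Fin 4) S, (ρ * pauliProd p).trace = 0) ∧
    ρ = σ := by
  have hσσ : (σ * σ).trace = 1 := by rw [hpure, hσtr]
  have hρσ : (ρ * σ).trace = 1 := by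
    rw [← hσσ, trace_mul_eq_sum_pauliProd, trace_mul_eq_sum_pauliProd]
    congr 1
    refine Finset.sum_congr rfl fun p _ ↦ ?_
    by_cases hp : p ∈ insert (0, 0) S
    · rcases hp with rfl | hpS
      · rw [pauliProd_zero_zero, mul_one, mul_one, hρtr, hσtr]
      · rw [hagree p hpS]
    · rw [hvanish p hp, mul_zero, mul_zero]
  have hρ_eq : ρ = σ := hρ.eq_of_trace_mul_eq_one hρtr hσ.isHermitian hσσ hρσ
  exact ⟨fun p hp ↦ hρ_eq ▸ hvanish p hp, hρ_eq⟩
end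

section
/- Let ρ be a two-qubit Bell-diagonal state with largest eigenvalue λ_{φ+} ≥ 1/2 and S_max(ρ) ≥ 2. Then λ_{φ+} ≥ (1 + √((S_max(ρ)/2)² − 1))/2. -/
/-- For a two-qubit Bell-diagonal state with eigenvalues
`λ₁ = λ_{φ+} ≥ λ₂, λ₃, λ₄` summing to `1`, with `λ₁ ≥ 1/2`, and with maximal
CHSH value `S = 2√2·√((λ₁-λ₂)² + (λ₃-λ₄)²)` (Horodecki criterion) satisfying
`S ≥ 2`, we have `λ₁ ≥ (1 + √((S/2)² − 1))/2`. -/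
theorem stmt13 (l1 l2 l3 l4 S : ℝ)
    (h1 : 0 ≤ l1) (h2 : 0 ≤ l2) (h3 : 0 ≤ l3) (h4 : 0 ≤ l4)
    (hsum : l1 + l2 + l3 + l4 = 1)
    (hmax2 : l2 ≤ l1) (hmax3 : l3 ≤ l1) (hmax4 : l4 ≤ l1)
    (hhalf : 1 / 2 ≤ l1)
    (hS : S = 2 * Real.sqrt 2 * Real.sqrt ((l1 - l2) ^ 2 + (l3 - l4) ^ 2))
    (hS2 : 2 ≤ S) :
    (1 + Real.sqrt ((S / 2) ^ 2 - 1)) / 2 ≤ l1 := by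
  have hx : 0 ≤ (l1 - l2) ^ 2 + (l3 - l4) ^ 2 := by positivity
  have hsq : (S / 2) ^ 2 = 2 * ((l1 - l2) ^ 2 + (l3 - l4) ^ 2) := by
    rw [hS, div_pow, mul_pow, mul_pow, Real.sq_sqrt (by norm_num : (0:ℝ) ≤ 2),
      Real.sq_sqrt hx]
    ring
  have key : (S / 2) ^ 2 - 1 ≤ (2 * l1 - 1) ^ 2 := by
    rw [hsq]
    nlinarith [sq_nonneg (l1 - l2 + l3 + l4), sq_nonneg (l3 - l4),
      mul_nonneg h3 h4]
  have h2l : 0 ≤ 2 * l1 - 1 := by linarith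
  have h := Real.sqrt_le_sqrt key
  rw [Real.sqrt_sq h2l] at h
  linarith
end

section
/- Let A⁰ and A¹ be two Hermitian operators on a finite-dimensional complex Hilbert space, each having exactly two eigenvalues, 1 and -1. Then there exists an orthogonal decomposition of the Hilbert space into subspaces of dimension at most 2, each of which is invariant under both A⁰ and A¹. -/
/-!
For symmetric involutions `T₀`, `T₁` the operator `C = T₀ T₁ + T₁ T₀` is symmetric and commutes
with `T₀`, so every nonzero subspace invariant under both contains a common eigenvector `v` of `C`
and `T₀`, say `C v = μ v` and `T₀ v = ν v`. Since `T₀ (T₁ v) = μ v - ν T₁ v` and `T₁ (T₁ v) = v`,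
the span of `v` and `T₁ v` is invariant under both, of dimension at most 2. Orthogonal complements
of invariant subspaces of symmetric operators are invariant, so such blocks can be split off one
at a time. A Hermitian matrix with spectrum `{1, -1}` is an involution by the spectral theorem.
-/

open Matrix Module Submodule Function

theorem commute_self_mul_add_mul_swap {R : Type*} [Semiring R] {a : R} (b : R) (ha : a * a = 1) :
    Commute a (a * b + b * a) := by
  simp only [Commute, SemiconjBy, mul_add, add_mul, ← mul_assoc, ha, one_mul]
  rw [mul_assoc b, ha, mul_one, add_comm]

theorem finrank_span_pair_le {K V : Type*} [DivisionRing K] [AddCommGroup V] [Module K V]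
    (v w : V) : finrank K (span K {v, w}) ≤ 2 := by
  classical
  exact (finrank_span_le_card _).trans (by simpa using Finset.card_le_two)

theorem span_pair_mem_invtSubmodule {R M : Type*} [CommRing R] [AddCommGroup M] [Module R M]
    {T₀ T₁ : Module.End R M} (hi₁ : Involutive T₁) {v : M} {μ ν : R} (h₀v : T₀ v = ν • v)
    (hv : (T₀ * T₁ + T₁ * T₀) v = μ • v) :
    span R {v, T₁ v} ∈ T₀.invtSubmodule ∧ span R {v, T₁ v} ∈ T₁.invtSubmodule := by
  have hv_mem : v ∈ span R {v, T₁ v} := subset_span (by simp)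
  have hT₁v_mem : T₁ v ∈ span R {v, T₁ v} := subset_span (by simp)
  have h₀T₁v : T₀ (T₁ v) = μ • v - ν • T₁ v := by
    rw [LinearMap.add_apply, End.mul_apply, End.mul_apply, h₀v, map_smul] at hv
    rw [← hv, add_sub_cancel_right]
  constructor <;> refine (End.mem_invtSubmodule _).mpr (span_le.mpr ?_) <;>
    rintro x (rfl | rfl) <;> rw [SetLike.mem_coe, mem_comap]
  · rw [h₀v]; exact smul_mem _ _ hv_mem
  · rw [h₀T₁v]; exact sub_mem (smul_mem _ _ hv_mem) (smul_mem _ _ hT₁v_mem)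
  · exact hT₁v_mem
  · rw [hi₁]; exact hv_mem

variable {𝕜 E : Type*} [RCLike 𝕜] [NormedAddCommGroup E] [InnerProductSpace 𝕜 E]

namespace Submodule

variable [FiniteDimensional 𝕜 E]

theorem exists_finite_pairwise_isOrtho_sSup_eq (P : Submodule 𝕜 E → Prop) (d : ℕ)
    (hP : ∀ U V, P U → P V → P (Uᗮ ⊓ V))
    (hsmall : ∀ V, P V → V ≠ ⊥ → ∃ U ≤ V, U ≠ ⊥ ∧ P U ∧ finrank 𝕜 U ≤ d)
    (V : Submodule 𝕜 E) (hV : P V) :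
    ∃ S : Set (Submodule 𝕜 E), S.Finite ∧ S.Pairwise (· ⟂ ·) ∧ sSup S = V ∧
      ∀ W ∈ S, P W ∧ finrank 𝕜 W ≤ d := by
  induction hr : finrank 𝕜 V using Nat.strong_induction_on generalizing V with
  | _ r ih =>
    rcases eq_or_ne V ⊥ with rfl | hV0
    · exact ⟨∅, Set.finite_empty, Set.pairwise_empty _, sSup_empty, by simp⟩
    obtain ⟨U, hUV, hU0, hPU, hUd⟩ := hsmall V hV hV0
    have hrank : finrank 𝕜 U + finrank 𝕜 ↥(Uᗮ ⊓ V) = r :=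
      hr ▸ finrank_add_inf_finrank_orthogonal hUV
    have hUpos : finrank 𝕜 U ≠ 0 := finrank_eq_zero.not.mpr hU0
    obtain ⟨S, hSfin, hSorth, hSsup, hSP⟩ := ih _ (by omega) (Uᗮ ⊓ V) (hP U V hPU hV) rfl
    have hSU : ∀ W ∈ S, U ⟂ W := fun W hW =>
      (isOrtho_iff_le.mpr ((le_sSup hW).trans (hSsup ▸ inf_le_left))).symm
    refine ⟨insert U S, hSfin.insert U, ?_, ?_, ?_⟩
    · exact Set.pairwise_insert_of_symm.mpr ⟨hSorth, fun W hW _ => hSU W hW⟩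
    · rw [sSup_insert, hSsup, sup_orthogonal_inf_of_hasOrthogonalProjection hUV]
    · rintro W (rfl | hW)
      exacts [⟨hPU, hUd⟩, hSP W hW]

end Submodule

namespace LinearMap.IsSymmetric

variable {T T₀ T₁ : Module.End 𝕜 E}

theorem mul_add_mul_swap (h₀ : T₀.IsSymmetric) (h₁ : T₁.IsSymmetric) :
    (T₀ * T₁ + T₁ * T₀).IsSymmetric := fun x y => by
  simp only [add_apply, End.mul_apply, inner_add_left, inner_add_right, h₀ _, h₁ _, add_comm]

variable [FiniteDimensional 𝕜 E] {V : Submodule 𝕜 E}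

theorem exists_inf_eigenspace_ne_bot (hT : T.IsSymmetric) (hV : V ∈ T.invtSubmodule)
    (hV0 : V ≠ ⊥) : ∃ μ : 𝕜, V ⊓ End.eigenspace T μ ≠ ⊥ := by
  have : Nontrivial V := nontrivial_iff_ne_bot.mpr hV0
  have hTV : ∀ v ∈ V, T v ∈ V := (End.mem_invtSubmodule_iff_forall_mem_of_mem T).mp hV
  obtain ⟨μ, hμ⟩ : ∃ μ : 𝕜, End.HasEigenvalue (T.restrict hTV) μ :=
    ⟨_, (hT.restrict_invariant hTV).hasEigenvalue_iSup_of_finiteDimensional⟩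
  exact ⟨μ, fun h => hμ (End.eigenspace_restrict_eq_bot hTV (by rwa [disjoint_iff, inf_comm]))⟩

theorem involutive_of_spectrum_subset (hT : T.IsSymmetric) (h : spectrum 𝕜 T ⊆ {1, -1}) :
    Involutive T := by
  have hker : ⨆ μ, End.eigenspace T μ ≤ LinearMap.ker (T * T - 1) := by
    refine iSup_le fun μ x hx => ?_
    rcases eq_or_ne x 0 with rfl | hx0
    · exact zero_mem _
    have hμ : μ * μ = 1 := by
      rcases h (End.hasEigenvalue_of_hasEigenvector ⟨hx, hx0⟩).mem_spectrum with rfl | rfl <;>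
        norm_num
    rw [End.mem_eigenspace_iff] at hx
    simp [hx, smul_smul, hμ]
  have htop : ⨆ μ, End.eigenspace T μ = ⊤ :=
    orthogonal_eq_bot_iff.mp hT.orthogonalComplement_iSup_eigenspaces_eq_bot
  intro x
  simpa [sub_eq_zero] using hker (htop ▸ mem_top : x ∈ ⨆ μ, End.eigenspace T μ)

theorem exists_le_invtSubmodule_finrank_le_two (h₀ : T₀.IsSymmetric) (h₁ : T₁.IsSymmetric)
    (hi₀ : Involutive T₀) (hi₁ : Involutive T₁) (hV₀ : V ∈ T₀.invtSubmodule)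
    (hV₁ : V ∈ T₁.invtSubmodule) (hV0 : V ≠ ⊥) :
    ∃ U ≤ V, U ≠ ⊥ ∧ (U ∈ T₀.invtSubmodule ∧ U ∈ T₁.invtSubmodule) ∧ finrank 𝕜 U ≤ 2 := by
  set C := T₀ * T₁ + T₁ * T₀
  have hVC : V ∈ C.invtSubmodule := fun x hx =>
    show T₀ (T₁ x) + T₁ (T₀ x) ∈ V from add_mem (hV₀ (hV₁ hx)) (hV₁ (hV₀ hx))
  obtain ⟨μ, hμ⟩ := (h₀.mul_add_mul_swap h₁).exists_inf_eigenspace_ne_bot hVC hV0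
  have hCT₀ : Commute C T₀ := (commute_self_mul_add_mul_swap T₁ (LinearMap.ext hi₀)).symm
  have hU₀ : V ⊓ End.eigenspace C μ ∈ T₀.invtSubmodule :=
    End.invtSubmodule.inf_mem hV₀ (End.mapsTo_genEigenspace_of_comm hCT₀ μ 1)
  obtain ⟨ν, hν⟩ := h₀.exists_inf_eigenspace_ne_bot hU₀ hμ
  obtain ⟨v, ⟨⟨hvV, hvC⟩, hv₀⟩, hv0⟩ := (Submodule.ne_bot_iff _).mp hν
  refine ⟨span 𝕜 {v, T₁ v}, span_le.mpr ?_, ?_,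
    span_pair_mem_invtSubmodule hi₁ (End.mem_eigenspace_iff.mp hv₀) (End.mem_eigenspace_iff.mp hvC),
    finrank_span_pair_le _ _⟩
  · rintro x (rfl | rfl)
    exacts [hvV, hV₁ hvV]
  · exact fun h => hv0 ((Submodule.eq_bot_iff _).mp h v (subset_span (by simp)))

theorem exists_orthogonal_decomposition_finrank_le_two (h₀ : T₀.IsSymmetric)
    (h₁ : T₁.IsSymmetric) (hi₀ : Involutive T₀) (hi₁ : Involutive T₁) :
    ∃ S : Set (Submodule 𝕜 E), S.Finite ∧ S.Pairwise (· ⟂ ·) ∧ sSup S = ⊤ ∧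
      ∀ W ∈ S, (W ∈ T₀.invtSubmodule ∧ W ∈ T₁.invtSubmodule) ∧ finrank 𝕜 W ≤ 2 :=
  exists_finite_pairwise_isOrtho_sSup_eq (fun V => V ∈ T₀.invtSubmodule ∧ V ∈ T₁.invtSubmodule) 2
    (fun _ _ hU hV =>
      ⟨End.invtSubmodule.inf_mem (h₀.orthogonalComplement_mem_invtSubmodule hU.1) hV.1,
        End.invtSubmodule.inf_mem (h₁.orthogonalComplement_mem_invtSubmodule hU.2) hV.2⟩)
    (fun _ hV hV0 => exists_le_invtSubmodule_finrank_le_two h₀ h₁ hi₀ hi₁ hV.1 hV.2 hV0)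
    ⊤ ⟨End.invtSubmodule.top_mem _, End.invtSubmodule.top_mem _⟩

end LinearMap.IsSymmetric

theorem Matrix.IsHermitian.involutive_toEuclideanLin {n : Type*} [Fintype n] [DecidableEq n]
    {A : Matrix n n 𝕜} (hA : A.IsHermitian) (hs : spectrum 𝕜 A ⊆ {1, -1}) :
    Involutive (toEuclideanLin A) :=
  (isSymmetric_toEuclideanLin_iff.mpr hA).involutive_of_spectrum_subset
    ((spectrum_toLpLin 2).trans_subset hs)

/-- Jordan's lemma: two Hermitian operators on a finite-dimensional complex
Hilbert space, each with spectrum exactly `{1, -1}`, admit a common orthogonal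
decomposition of the space into invariant subspaces of dimension at most 2. -/
theorem stmt18 {n : ℕ} (A0 A1 : Matrix (Fin n) (Fin n) ℂ)
    (hA0 : A0.IsHermitian) (hA1 : A1.IsHermitian)
    (hs0 : spectrum ℂ A0 = {1, -1}) (hs1 : spectrum ℂ A1 = {1, -1}) :
    ∃ (k : ℕ) (W : Fin k → Submodule ℂ (EuclideanSpace ℂ (Fin n))),
      (∀ i, Module.finrank ℂ (W i) ≤ 2) ∧
      (∀ i j, i ≠ j → ∀ v ∈ W i, ∀ w ∈ W j, (inner ℂ v w : ℂ) = 0) ∧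
      (⨆ i, W i) = ⊤ ∧
      (∀ i, (W i).map (Matrix.toEuclideanLin A0) ≤ W i) ∧
      (∀ i, (W i).map (Matrix.toEuclideanLin A1) ≤ W i) := by
  obtain ⟨S, hSfin, hSorth, hStop, hS⟩ :=
    (isSymmetric_toEuclideanLin_iff.mpr hA0).exists_orthogonal_decomposition_finrank_le_two
      (isSymmetric_toEuclideanLin_iff.mpr hA1) (hA0.involutive_toEuclideanLin hs0.subset)
      (hA1.involutive_toEuclideanLin hs1.subset)
  obtain ⟨k, W, rfl⟩ := hSfin.fin_embedding
  refine ⟨k, W, fun i => (hS _ ⟨i, rfl⟩).2, fun i j hij v hv w hw => ?_, ?_,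
    fun i => (End.mem_invtSubmodule_iff_map_le _).mp (hS _ ⟨i, rfl⟩).1.1,
    fun i => (End.mem_invtSubmodule_iff_map_le _).mp (hS _ ⟨i, rfl⟩).1.2⟩
  · exact (hSorth ⟨i, rfl⟩ ⟨j, rfl⟩ (W.injective.ne hij)).inner_eq hv hw
  · rwa [sSup_range] at hStop
end
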